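/- arXiv:2007.09783 — 5 statements merged into one kernel-verified Lean document; each statement's English description precedes it below -/
import Mathlib

section
/- Let $r \in (0,1)$ and let $m$ be a positive integer. Then there exists a nondecreasing sequence $(d(n))_{n \geq 1}$ of positive integers such that $\lim_{n \to \infty} d(n) = \infty$ and $\prod_{n=1}^{\infty}\left(1 - \frac{m}{d(n)+m}\right) = r$. -/
/-!
Choose the factors greedily: `d n` is the least index, not below `d (n - 1)`, for which the
partial product including the factor `f (d n)` still exceeds `r`. The partial products then decrease
and stay above `r`, so they converge to some `L ≥ r`. The indices are unbounded, for otherwise all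
factors are at most some `c < 1` and the partial products would tend to `0`. If `L > r`, pick `K`
with `L * f K > r`; by minimality no `d n` ever exceeds `K`, a contradiction, so `L = r`.
-/

open Filter Topology Finset

section Greedy

variable {f : ℕ → ℝ} {r : ℝ}

/-- `(greedySeq f r n).1` is the last index chosen (`0` before any), and `(greedySeq f r n).2` is
the product of the first `n` chosen factors. -/
noncomputable def greedySeq (f : ℕ → ℝ) (r : ℝ) : ℕ → ℕ × ℝ
  | 0 => (0, 1)
  | n + 1 =>
    let s := greedySeq f r n
    let k := sInf {k | s.1 ≤ k ∧ r < s.2 * f k}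
    (k, s.2 * f k)

theorem greedySeq_succ_snd (n : ℕ) :
    (greedySeq f r (n + 1)).2 = (greedySeq f r n).2 * f (greedySeq f r (n + 1)).1 := rfl

theorem greedySeq_snd_eq_prod (N : ℕ) :
    (greedySeq f r N).2 = ∏ n ∈ range N, f (greedySeq f r (n + 1)).1 := by
  induction N with
  | zero => rfl
  | succ N ih => rw [prod_range_succ, ← ih, greedySeq_succ_snd]

theorem greedySeq_succ_fst_le {n j : ℕ} (hj : (greedySeq f r n).1 ≤ j)
    (hr : r < (greedySeq f r n).2 * f j) : (greedySeq f r (n + 1)).1 ≤ j :=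
  Nat.sInf_le ⟨hj, hr⟩

theorem exists_lt_mul_of_tendsto_one (hf : Tendsto f atTop (𝓝 1)) {P : ℝ} (hP : r < P)
    (n : ℕ) : ∃ k ≥ n, r < P * f k := by
  have hPf : Tendsto (fun k => P * f k) atTop (𝓝 P) := by
    simpa using hf.const_mul P
  exact ((eventually_ge_atTop n).and (hPf.eventually (lt_mem_nhds hP))).exists

theorem greedySeq_succ_mem (hf : Tendsto f atTop (𝓝 1)) {n : ℕ} (h : r < (greedySeq f r n).2) :
    (greedySeq f r n).1 ≤ (greedySeq f r (n + 1)).1 ∧ r < (greedySeq f r (n + 1)).2 :=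
  Nat.sInf_mem (exists_lt_mul_of_tendsto_one hf h _)

theorem lt_greedySeq_snd (hf : Tendsto f atTop (𝓝 1)) (hr : r < 1) (n : ℕ) :
    r < (greedySeq f r n).2 := by
  induction n with
  | zero => exact hr
  | succ n ih => exact (greedySeq_succ_mem hf ih).2

theorem monotone_greedySeq_fst (hf : Tendsto f atTop (𝓝 1)) (hr : r < 1) :
    Monotone fun n => (greedySeq f r n).1 :=
  monotone_nat_of_le_succ fun n => (greedySeq_succ_mem hf (lt_greedySeq_snd hf hr n)).1

theorem antitone_greedySeq_snd (hf0 : ∀ k, 0 < f k) (hf1 : ∀ k, f k ≤ 1) :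
    Antitone fun n => (greedySeq f r n).2 := by
  refine antitone_nat_of_succ_le fun n => ?_
  have hpos : 0 < (greedySeq f r n).2 := by
    rw [greedySeq_snd_eq_prod]
    exact prod_pos fun k _ => hf0 _
  rw [greedySeq_succ_snd]
  exact mul_le_of_le_one_right hpos.le (hf1 _)

theorem not_bddAbove_greedySeq_fst (hf0 : ∀ k, 0 < f k) (hf1 : ∀ k, f k < 1)
    (hf : Tendsto f atTop (𝓝 1)) (hr : r ∈ Set.Ioo 0 1) :
    ¬ BddAbove (Set.range fun n => (greedySeq f r n).1) := by
  rintro ⟨b, hb⟩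
  obtain ⟨k₀, -, hk₀⟩ := (range (b + 1)).exists_max_image f ⟨0, mem_range.2 b.succ_pos⟩
  have hle : ∀ n, f (greedySeq f r (n + 1)).1 ≤ f k₀ := fun n =>
    hk₀ _ (mem_range_succ_iff.2 (hb ⟨n + 1, rfl⟩))
  have hpow : ∀ N, (greedySeq f r N).2 ≤ f k₀ ^ N := fun N => by
    calc (greedySeq f r N).2 = ∏ n ∈ range N, f (greedySeq f r (n + 1)).1 :=
          greedySeq_snd_eq_prod N
      _ ≤ ∏ _n ∈ range N, f k₀ := prod_le_prod (fun n _ => (hf0 _).le) fun n _ => hle n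
      _ = f k₀ ^ N := by rw [prod_const, card_range]
  obtain ⟨N, hN⟩ := ((tendsto_pow_atTop_nhds_zero_of_lt_one (hf0 k₀).le (hf1 k₀)).eventually
    (gt_mem_nhds hr.1)).exists
  exact (lt_greedySeq_snd hf hr.2 N).not_ge ((hpow N).trans hN.le)

theorem tendsto_greedySeq_snd (hf0 : ∀ k, 0 < f k) (hf1 : ∀ k, f k < 1)
    (hf : Tendsto f atTop (𝓝 1)) (hr : r ∈ Set.Ioo 0 1) :
    Tendsto (fun n => (greedySeq f r n).2) atTop (𝓝 r) := by
  have hanti := antitone_greedySeq_snd (r := r) hf0 fun k => (hf1 k).le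
  have hlt := lt_greedySeq_snd hf hr.2
  have hlim := tendsto_atTop_ciInf hanti ⟨r, Set.forall_mem_range.2 fun n => (hlt n).le⟩
  suffices hL : ⨅ n, (greedySeq f r n).2 = r by rwa [hL] at hlim
  refine le_antisymm ?_ (le_ciInf fun n => (hlt n).le)
  by_contra! hL
  obtain ⟨K, -, hK⟩ := exists_lt_mul_of_tendsto_one hf hL 0
  have hbdd : ∀ n, (greedySeq f r n).1 ≤ K := by
    intro n
    induction n with
    | zero => exact K.zero_le
    | succ n ih =>
      refine greedySeq_succ_fst_le ih (hK.trans_le ?_)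
      exact mul_le_mul_of_nonneg_right (hanti.le_of_tendsto hlim n) (hf0 K).le
  exact not_bddAbove_greedySeq_fst hf0 hf1 hf hr ⟨K, Set.forall_mem_range.2 hbdd⟩

theorem exists_monotone_tendsto_prod_eq (hf0 : ∀ k, 0 < f k) (hf1 : ∀ k, f k < 1)
    (hf : Tendsto f atTop (𝓝 1)) (hr : r ∈ Set.Ioo 0 1) :
    ∃ d : ℕ → ℕ, Monotone d ∧ Tendsto d atTop atTop ∧
      Tendsto (fun N => ∏ n ∈ range N, f (d n)) atTop (𝓝 r) := by
  have hmono := monotone_greedySeq_fst hf hr.2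
  refine ⟨fun n => (greedySeq f r (n + 1)).1, fun a b hab => hmono (by omega), ?_, ?_⟩
  · exact (tendsto_atTop_atTop_of_monotone' hmono
      (not_bddAbove_greedySeq_fst hf0 hf1 hf hr)).comp (tendsto_add_atTop_nat 1)
  · simpa only [greedySeq_snd_eq_prod] using tendsto_greedySeq_snd hf0 hf1 hf hr

end Greedy

/-- Let `r ∈ (0,1)` and let `m` be a positive integer. Then there exists a
nondecreasing sequence `(d n)` of positive integers tending to infinity such that
`∏_{n=1}^∞ (1 - m/(d n + m)) = r`, the infinite product being the limit of the partial
products. -/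
theorem exists_seq_prod_eq (r : ℝ) (hr : r ∈ Set.Ioo (0 : ℝ) 1) (m : ℕ) (hm : 0 < m) :
    ∃ d : ℕ → ℕ, Monotone d ∧ (∀ n, 0 < d n) ∧ Tendsto d atTop atTop ∧
      Tendsto (fun N => ∏ n ∈ Finset.range N, (1 - (m : ℝ) / ((d n : ℝ) + m)))
        atTop (𝓝 r) := by
  -- The index shift `k ↦ k + 1` is what makes the resulting `d n` positive.
  set f : ℕ → ℝ := fun k => 1 - (m : ℝ) / (((k + 1 : ℕ) : ℝ) + m)
  have hf0 : ∀ k, 0 < f k := fun k =>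
    sub_pos.2 <| (div_lt_one (by positivity)).2 (lt_add_of_pos_left _ (by positivity))
  have hf1 : ∀ k, f k < 1 := fun k => sub_lt_self 1 (by positivity)
  have hf : Tendsto f atTop (𝓝 1) := by
    have hden : Tendsto (fun k : ℕ => ((k + 1 : ℕ) : ℝ) + m) atTop atTop :=
      tendsto_atTop_add_const_right _ _ (tendsto_natCast_atTop_atTop.comp (tendsto_add_atTop_nat 1))
    have hlim : Tendsto f atTop (𝓝 (1 - 0)) :=
      tendsto_const_nhds.sub ((tendsto_const_nhds (x := (m : ℝ))).div_atTop hden)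
    rwa [sub_zero] at hlim
  obtain ⟨d, hmono, htend, hprod⟩ := exists_monotone_tendsto_prod_eq hf0 hf1 hf hr
  exact ⟨fun n => d n + 1, fun a b hab => Nat.succ_le_succ (hmono hab), fun n => (d n).succ_pos,
    tendsto_atTop_mono (fun n => (d n).le_succ) htend, hprod⟩
end

section
/- Let $n$ be a positive integer, let $\varepsilon > 0$, and let $b$ be a normal element of the $n \times n$ complex matrices with $\|b\| = 1$. Suppose that $\|bc - cb\| < \varepsilon$ for every $c \in M_n(\mathbb{C})$ with $\|c\| = 1$. Then there exists $\xi \in \mathbb{C}$ with $|\xi| = 1$ such that $\|b - \xi \cdot 1\| < \varepsilon$. -/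
set_option maxRecDepth 8000
set_option synthInstance.maxHeartbeats 1000000
set_option maxHeartbeats 1000000

open scoped InnerProductSpace Pointwise
open ContinuousLinearMap

lemma aux_isStarNormal_sub_smul_one {A : Type*} [Ring A] [StarRing A] [Algebra ℂ A]
    [StarModule ℂ A] (a : A) (ξ : ℂ) [ha : IsStarNormal a] : IsStarNormal (a - ξ • 1) := by
  constructor
  have h := ha.star_comm_self.eq
  simp only [star_sub, star_smul, star_one, Commute, SemiconjBy]
  simp only [sub_mul, mul_sub, smul_mul_assoc, mul_smul_comm, mul_one, one_mul, h]
  module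

variable {E : Type*} [NormedAddCommGroup E] [InnerProductSpace ℂ E] [CompleteSpace E]

lemma aux_norm_star_apply_eq (S : E →L[ℂ] E) [hS : IsStarNormal S] (x : E) :
    ‖(star S) x‖ = ‖S x‖ := by
  have h1 : ⟪(star S * S) x, x⟫_ℂ = ⟪S x, S x⟫_ℂ := by
    simp only [ContinuousLinearMap.mul_apply, ContinuousLinearMap.star_eq_adjoint,
      ContinuousLinearMap.adjoint_inner_left]
  have hssa : ContinuousLinearMap.adjoint (star S) = S := by
    rw [ContinuousLinearMap.star_eq_adjoint, ContinuousLinearMap.adjoint_adjoint]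
  have h2 : ⟪(star S * S) x, x⟫_ℂ = ⟪(star S) x, (star S) x⟫_ℂ := calc
    ⟪(star S * S) x, x⟫_ℂ = ⟪(S * star S) x, x⟫_ℂ := by rw [hS.star_comm_self.eq]
    _ = ⟪(ContinuousLinearMap.adjoint (star S)) ((star S) x), x⟫_ℂ := by rw [hssa]; rfl
    _ = ⟪(star S) x, (star S) x⟫_ℂ := ContinuousLinearMap.adjoint_inner_left _ _ _
  have h3 : ⟪S x, S x⟫_ℂ = ⟪(star S) x, (star S) x⟫_ℂ := h1.symm.trans h2
  rw [inner_self_eq_norm_sq_to_K, inner_self_eq_norm_sq_to_K] at h3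
  have h4 : ‖S x‖ ^ 2 = ‖(star S) x‖ ^ 2 := by exact_mod_cast h3
  nlinarith [norm_nonneg (S x), norm_nonneg ((star S) x)]

lemma aux_adjoint_eigen (S : E →L[ℂ] E) [IsStarNormal S] {μ : ℂ} {v : E}
    (hv : S v = μ • v) : (star S) v = (starRingEnd ℂ μ) • v := by
  have hnel : IsStarNormal (S - μ • 1) := aux_isStarNormal_sub_smul_one S μ
  have h0 : (S - μ • 1) v = 0 := by
    simp [ContinuousLinearMap.sub_apply, hv]
  have hh := aux_norm_star_apply_eq (S - μ • 1) v
  rw [h0, norm_zero] at hh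
  have hz : (star (S - μ • 1)) v = 0 := norm_eq_zero.mp hh
  have h5 : (star S) v - (starRingEnd ℂ μ) • v = 0 := by
    simpa [star_sub, star_smul, star_one, ContinuousLinearMap.sub_apply] using hz
  exact sub_eq_zero.mp h5

/-- every spectral value of an operator on a finite-dimensional space is an eigenvalue, with a
unit eigenvector. -/
lemma aux_exists_eigenvector [FiniteDimensional ℂ E] (S : E →L[ℂ] E) {μ : ℂ}
    (hμ : μ ∈ spectrum ℂ S) : ∃ v : E, ‖v‖ = 1 ∧ S v = μ • v := by
  have hni : ¬ Function.Injective (S - μ • (1 : E →L[ℂ] E)) := by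
    intro hinj
    set T : E →ₗ[ℂ] E := (S - μ • (1 : E →L[ℂ] E) : E →L[ℂ] E).toLinearMap with hT
    have hinj' : Function.Injective T := hinj
    have hsurj : Function.Surjective T :=
      LinearMap.injective_iff_surjective.mp hinj'
    have hbij : Function.Bijective T := ⟨hinj', hsurj⟩
    let e := LinearEquiv.ofBijective T hbij
    let e' : E ≃L[ℂ] E := e.toContinuousLinearEquiv
    have : IsUnit (S - μ • 1) := by
      refine ⟨e'.toUnit, ?_⟩
      ext x
      rfl
    rw [spectrum.mem_iff] at hμ
    apply hμ
    have : (algebraMap ℂ (E →L[ℂ] E)) μ - S = -(S - μ • 1) := by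
      rw [Algebra.algebraMap_eq_smul_one]; abel
    rw [this]
    exact this ▸ (IsUnit.neg ‹IsUnit (S - μ • 1)›)
  rw [Function.not_injective_iff] at hni
  obtain ⟨x, y, hxy, hne⟩ := hni
  have hv0 : x - y ≠ 0 := sub_ne_zero.mpr hne
  refine ⟨((‖x - y‖⁻¹ : ℝ) : ℂ) • (x - y), ?_, ?_⟩
  · rw [norm_smul, Complex.norm_real, norm_inv, norm_norm,
      inv_mul_cancel₀ (norm_ne_zero_iff.mpr hv0)]
  · have hS : S (x - y) = μ • (x - y) := by
      have : (S - μ • 1) (x - y) = 0 := by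
        simp only [map_sub]
        rw [show (S - μ • 1) x = (S - μ • 1) y from hxy]
        abel
      simpa [ContinuousLinearMap.sub_apply, sub_eq_zero] using this
    rw [map_smul, hS, smul_comm]

/-- Let `b` be a normal element of `M_n(ℂ)` (realized as the C*-algebra of
bounded operators on the `n`-dimensional complex Hilbert space) with `‖b‖ = 1`.
If `‖bc - cb‖ < ε` for every `c` of norm one, then there is `ξ ∈ ℂ` with `|ξ| = 1` such that
`‖b - ξ·1‖ < ε`. -/
theorem almost_central_normal_close_to_scalar (n : ℕ) (hn : 0 < n) (ε : ℝ) (hε : 0 < ε)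
    (b : EuclideanSpace ℂ (Fin n) →L[ℂ] EuclideanSpace ℂ (Fin n))
    (hb : IsStarNormal b) (hbn : ‖b‖ = 1)
    (hcomm : ∀ c : EuclideanSpace ℂ (Fin n) →L[ℂ] EuclideanSpace ℂ (Fin n),
      ‖c‖ = 1 → ‖b * c - c * b‖ < ε) :
    ∃ ξ : ℂ, ‖ξ‖ = 1 ∧ ‖b - ξ • (1 : EuclideanSpace ℂ (Fin n) →L[ℂ] EuclideanSpace ℂ (Fin n))‖ < ε := by
  haveI : Nonempty (Fin n) := ⟨⟨0, hn⟩⟩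
  haveI : Nontrivial (EuclideanSpace ℂ (Fin n)) :=
    inferInstanceAs (Nontrivial (PiLp 2 fun _ : Fin n => ℂ))
  haveI : Nontrivial (EuclideanSpace ℂ (Fin n) →L[ℂ] EuclideanSpace ℂ (Fin n)) := ⟨1, 0, one_ne_zero⟩
  -- key: any two spectral values are within ε
  have key : ∀ ξ μ : ℂ, ξ ∈ spectrum ℂ b → μ ∈ spectrum ℂ b → ‖ξ - μ‖ < ε := by
    intro ξ μ hξ hμ
    obtain ⟨w, hw1, hw⟩ := aux_exists_eigenvector b hξ
    obtain ⟨v, hv1, hv⟩ := aux_exists_eigenvector b hμ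
    set c : EuclideanSpace ℂ (Fin n) →L[ℂ] EuclideanSpace ℂ (Fin n) := (innerSL ℂ v).smulRight w with hc
    have hcn : ‖c‖ = 1 := by
      rw [hc, ContinuousLinearMap.norm_smulRight_apply, innerSL_apply_norm, hv1, hw1, mul_one]
    have hbstar : (star b) v = (starRingEnd ℂ μ) • v := aux_adjoint_eigen b hv
    have hcomm' : b * c - c * b = (ξ - μ) • c := by
      ext x
      simp only [ContinuousLinearMap.sub_apply, ContinuousLinearMap.mul_apply,
        ContinuousLinearMap.smul_apply, hc, ContinuousLinearMap.smulRight_apply,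
        innerSL_apply_apply]
      have h1 : b (⟪v, x⟫_ℂ • w) = ⟪v, x⟫_ℂ • (ξ • w) := by rw [map_smul, hw]
      have h2 : ⟪v, b x⟫_ℂ = μ * ⟪v, x⟫_ℂ := by
        rw [← ContinuousLinearMap.adjoint_inner_left, ← ContinuousLinearMap.star_eq_adjoint,
          hbstar, inner_smul_left]
        simp
      rw [h1, h2, smul_smul, smul_smul, ← sub_smul]
      ring_nf
    have h6 := hcomm c hcn
    rw [hcomm'] at h6
    rwa [norm_smul (ξ - μ) c, hcn, mul_one] at h6
  -- choose ξ in spectrum with ‖ξ‖ = 1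
  have hsp : spectralRadius ℂ b = ‖b‖₊ := IsStarNormal.spectralRadius_eq_nnnorm b
  obtain ⟨ξ, hξmem, hξnorm⟩ := spectrum.exists_nnnorm_eq_spectralRadius b
  have hξ1 : ‖ξ‖ = 1 := by
    rw [hsp] at hξnorm
    have : ‖ξ‖₊ = ‖b‖₊ := by exact_mod_cast hξnorm
    have : ‖ξ‖ = ‖b‖ := congrArg NNReal.toReal this
    rw [this, hbn]
  refine ⟨ξ, hξ1, ?_⟩
  -- now bound ‖b - ξ • 1‖
  set a := b - ξ • (1 : EuclideanSpace ℂ (Fin n) →L[ℂ] EuclideanSpace ℂ (Fin n)) with ha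
  haveI : IsStarNormal a := aux_isStarNormal_sub_smul_one b ξ
  have hspa : spectrum ℂ a = spectrum ℂ b - {ξ} := by
    rw [ha, show ξ • (1 : EuclideanSpace ℂ (Fin n) →L[ℂ] EuclideanSpace ℂ (Fin n)) =
      algebraMap ℂ _ ξ from (Algebra.algebraMap_eq_smul_one ξ).symm]
    exact (spectrum.sub_singleton_eq b ξ).symm
  have hra : spectralRadius ℂ a = ‖a‖₊ := IsStarNormal.spectralRadius_eq_nnnorm a
  obtain ⟨z, hzmem, hznorm⟩ := spectrum.exists_nnnorm_eq_spectralRadius a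
  rw [hra] at hznorm
  have hzn : ‖z‖ = ‖a‖ := by
    have : ‖z‖₊ = ‖a‖₊ := by exact_mod_cast hznorm
    exact congrArg NNReal.toReal this
  rw [hspa, Set.mem_sub] at hzmem
  obtain ⟨μ, hμ, ξ', hξ', hzz⟩ := hzmem
  rw [Set.mem_singleton_iff] at hξ'
  have hk : ‖μ - ξ‖ < ε := key μ ξ hμ hξmem
  rw [← hzn, ← hzz, hξ']
  exact hk
end

section
/- Let $A$ be a C*-algebra, let $a, b \in A_+$ with $\|a - b\| < \eta$ for some $\eta > 0$, and let $\lambda > 0$. Then $(a - \lambda - \eta)_+$ is Cuntz subequivalent to $(b - \lambda)_+$ in $A$. -/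
open Filter Topology

/-- Cuntz subequivalence: `a ≾ b` iff there is a sequence `(cₙ)` with `cₙ b cₙ* → a`. -/
def CuntzSub {A : Type*} [Mul A] [Star A] [TopologicalSpace A] (a b : A) : Prop :=
  ∃ c : ℕ → A, Tendsto (fun n => c n * b * star (c n)) atTop (𝓝 a)

/-- `(a - ε)₊`, obtained by applying `t ↦ max 0 (t - ε)` to `a` via the (nonunital)
continuous functional calculus. -/
noncomputable def cutdown {A : Type*} [NonUnitalCStarAlgebra A] (a : A) (ε : ℝ) : A :=
  cfcₙ (fun t : ℝ => max 0 (t - ε)) a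

/-
From `‖a - b‖ < η` we get `a ≤ (b - λ)₊ + (λ + η)` in the unitization, so it suffices to show
that `x ≤ y + ε` with `y ≥ 0` forces `(x - ε)₊ ≾ y`. For `s > 0` a function `f` of `x` with
`f² ≤ 1` conjugates `x - (ε - s)` into `(x - ε)₊`, whence `(x - ε)₊ ≤ f y f + s`. Finally, if
`r² ≤ z + s` with `r` self-adjoint and `m = (z + 2s)^(-1/2)`, then
`r² - (r m) z (r m)* = 2s (m r)* (m r)` and `‖m r² m‖ ≤ ‖m (z + 2s) m‖ = 1`, so `r²` is within `2s`
of a conjugate of `z`. Letting `s → 0` gives the Cuntz subequivalence.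
-/

open Unitization
open scoped CStarAlgebra

lemma CuntzSub.of_forall_exists_norm_le {A : Type*} [NonUnitalSeminormedRing A] [Star A]
    {a b : A} (h : ∀ ε > 0, ∃ c : A, ‖c * b * star c - a‖ ≤ ε) : CuntzSub a b := by
  choose c hc using fun n : ℕ => h (1 / ((n : ℝ) + 1)) Nat.one_div_pos_of_nat
  exact ⟨c, tendsto_iff_norm_sub_tendsto_zero.mpr <|
    squeeze_zero (fun _ => norm_nonneg _) hc tendsto_one_div_add_atTop_nhds_zero_nat⟩

noncomputable def cutdownFactor (ε s t : ℝ) : ℝ :=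
  √(max 0 (t - ε) / (max 0 (t - ε) + s))

lemma continuous_cutdownFactor (ε : ℝ) {s : ℝ} (hs : 0 < s) : Continuous (cutdownFactor ε s) := by
  have hu : Continuous fun t : ℝ => max 0 (t - ε) := by fun_prop
  exact (hu.div (hu.add continuous_const)
    fun _ => (add_pos_of_nonneg_of_pos (le_max_left _ _) hs).ne').sqrt

lemma cutdownFactor_mul_mul_cutdownFactor (ε : ℝ) {s : ℝ} (hs : 0 ≤ s) (t : ℝ) :
    cutdownFactor ε s t * (t - (ε - s)) * cutdownFactor ε s t = max 0 (t - ε) := by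
  rw [mul_right_comm, ← sq, cutdownFactor, Real.sq_sqrt (by positivity)]
  rcases le_or_gt t ε with ht | ht
  · simp [max_eq_left (sub_nonpos.mpr ht)]
  · rw [max_eq_right (by linarith)]
    field_simp
    ring

lemma cutdownFactor_mul_self_le_one (ε : ℝ) {s : ℝ} (hs : 0 ≤ s) (t : ℝ) :
    cutdownFactor ε s t * cutdownFactor ε s t ≤ 1 := by
  rw [← sq, cutdownFactor, Real.sq_sqrt (by positivity)]
  exact div_le_one_of_le₀ (by linarith) (by positivity)

section Unital

variable {B : Type*} [CStarAlgebra B]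

lemma cfc_mul_cfc_mul_cfc {x : B} {f g : ℝ → ℝ} (hf : ContinuousOn f (spectrum ℝ x))
    (hg : ContinuousOn g (spectrum ℝ x)) :
    cfc f x * cfc g x * cfc f x = cfc (fun t => f t * g t * f t) x := by
  rw [← cfc_mul f g x, ← cfc_mul (fun t => f t * g t) f x (hf.mul hg)]

variable [PartialOrder B] [StarOrderedRing B]

lemma le_add_algebraMap_of_norm_sub_le {x y : B} (hxy : IsSelfAdjoint (x - y)) {r : ℝ}
    (h : ‖x - y‖ ≤ r) : x ≤ y + algebraMap ℝ B r :=
  sub_le_iff_le_add'.mp (hxy.le_algebraMap_norm_self.trans (algebraMap_mono B h))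

lemma le_cfc_cutdown_add_algebraMap {x : B} (hx : IsSelfAdjoint x) (r : ℝ) :
    x ≤ cfc (fun t : ℝ => max 0 (t - r)) x + algebraMap ℝ B r := by
  rw [← cfc_add_const r _ x]
  conv_lhs => rw [← cfc_id' ℝ x]
  exact cfc_mono fun t _ => by linarith [le_max_right 0 (t - r)]

lemma exists_isSelfAdjoint_mul_mul_self_eq_one {z : B} {r : ℝ} (hr : 0 < r)
    (hz : algebraMap ℝ B r ≤ z) : ∃ m : B, IsSelfAdjoint m ∧ m * z * m = 1 := by
  have hz_sa : IsSelfAdjoint z := by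
    simpa using ((sub_nonneg.mpr hz).isSelfAdjoint).add (IsSelfAdjoint.algebraMap B (.all r))
  have hspec : ∀ t ∈ spectrum ℝ z, 0 < t := fun t ht =>
    hr.trans_le ((algebraMap_le_iff_le_spectrum hz_sa).mp hz t ht)
  refine ⟨cfc (fun t : ℝ => (√t)⁻¹) z, cfc_predicate _ _, ?_⟩
  have hcont : ContinuousOn (fun t : ℝ => (√t)⁻¹) (spectrum ℝ z) :=
    Real.continuous_sqrt.continuousOn.inv₀ fun t ht => (Real.sqrt_pos.mpr (hspec t ht)).ne'
  nth_rw 2 [← cfc_id ℝ z]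
  rw [cfc_mul_cfc_mul_cfc hcont continuousOn_id, ← cfc_const_one ℝ z]
  refine cfc_congr fun t ht => ?_
  rw [id, mul_right_comm, ← mul_inv, Real.mul_self_sqrt (hspec t ht).le,
    inv_mul_cancel₀ (hspec t ht).ne']

lemma norm_mul_self_sub_conj_le {R y m : B} (hR : IsSelfAdjoint R) (hm : IsSelfAdjoint m)
    {s : ℝ} (hs : 0 ≤ s) (hmy : m * (y + algebraMap ℝ B (2 * s)) * m = 1)
    (hRy : R * R ≤ y + algebraMap ℝ B s) :
    ‖R * R - (R * m) * y * star (R * m)‖ ≤ 2 * s := by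
  have hdiff : R * R - (R * m) * y * star (R * m) = (2 * s) • (star (m * R) * (m * R)) := by
    have h2s : m * algebraMap ℝ B (2 * s) * m = (2 * s) • (m * m) := by
      rw [Algebra.algebraMap_eq_smul_one, mul_smul_comm, smul_mul_assoc, mul_one]
    rw [star_mul, star_mul, hR.star_eq, hm.star_eq]
    calc R * R - R * m * y * (m * R)
        = R * (m * (y + algebraMap ℝ B (2 * s)) * m) * R - R * m * y * (m * R) := by
          rw [hmy, mul_one]
      _ = R * (m * algebraMap ℝ B (2 * s) * m) * R := by noncomm_ring
      _ = (2 * s) • (R * m * (m * R)) := by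
          rw [h2s, mul_smul_comm, smul_mul_assoc]; noncomm_ring
  have hconj : ‖m * (R * R) * m‖ ≤ 1 := by
    have hle : m * (R * R) * m ≤ m * (y + algebraMap ℝ B (2 * s)) * m :=
      hm.conjugate_le_conjugate (hRy.trans (by gcongr; linarith))
    rw [hmy] at hle
    exact (CStarAlgebra.norm_le_one_iff_of_nonneg _
      (hm.conjugate_nonneg hR.mul_self_nonneg)).mpr hle
  rw [hdiff, norm_smul, CStarRing.norm_star_mul_self, ← CStarRing.norm_self_mul_star, star_mul,
    hR.star_eq, hm.star_eq, Real.norm_of_nonneg (by positivity), ← mul_assoc, mul_assoc m R R]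
  exact mul_le_of_le_one_right (by positivity) hconj

lemma cfc_cutdown_le_conj_add {x y : B} (hx : IsSelfAdjoint x) {ε s : ℝ} (hs : 0 < s)
    (hxy : x ≤ y + algebraMap ℝ B ε) :
    cfc (fun t : ℝ => max 0 (t - ε)) x ≤
      cfc (cutdownFactor ε s) x * y * cfc (cutdownFactor ε s) x + algebraMap ℝ B s := by
  set F := cfc (cutdownFactor ε s) x
  have hf : ContinuousOn (cutdownFactor ε s) (spectrum ℝ x) :=
    (continuous_cutdownFactor ε hs).continuousOn
  have hF : IsSelfAdjoint F := cfc_predicate _ _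
  have hcut : cfc (fun t : ℝ => max 0 (t - ε)) x = F * (x - algebraMap ℝ B (ε - s)) * F := by
    have hx_shift : x - algebraMap ℝ B (ε - s) = cfc (fun t : ℝ => t - (ε - s)) x := by
      rw [cfc_sub _ _ x, cfc_id' ℝ x, cfc_const (ε - s) x]
    rw [hx_shift, cfc_mul_cfc_mul_cfc hf (by fun_prop)]
    exact cfc_congr fun t _ => (cutdownFactor_mul_mul_cutdownFactor ε hs.le t).symm
  have hshift : x - algebraMap ℝ B (ε - s) ≤ y + algebraMap ℝ B s := by
    rw [map_sub, sub_le_iff_le_add]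
    simpa [add_assoc] using hxy
  have hFsF : F * algebraMap ℝ B s * F ≤ algebraMap ℝ B s := by
    conv_lhs => rw [← cfc_const s x, cfc_mul_cfc_mul_cfc hf continuousOn_const]
    refine cfc_le_algebraMap _ s x fun t _ => ?_
    nlinarith [cutdownFactor_mul_self_le_one ε hs.le t]
  calc cfc (fun t : ℝ => max 0 (t - ε)) x = F * (x - algebraMap ℝ B (ε - s)) * F := hcut
    _ ≤ F * (y + algebraMap ℝ B s) * F := hF.conjugate_le_conjugate hshift
    _ = F * y * F + F * algebraMap ℝ B s * F := by noncomm_ring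
    _ ≤ F * y * F + algebraMap ℝ B s := by gcongr

end Unital

lemma Unitization.inr_snd_inr_mul {R A : Type*} [CommSemiring R] [NonUnitalSemiring A]
    [Module R A] [IsScalarTower R A A] [SMulCommClass R A A] (u : A) (v : Unitization R A) :
    (((u : Unitization R A) * v).snd : Unitization R A) = u * v := by
  ext <;> simp

section NonUnital

variable {A : Type*} [NonUnitalCStarAlgebra A]

lemma inr_cutdown (a : A) {ε : ℝ} (hε : 0 ≤ ε) :
    ((cutdown a ε : A) : A⁺¹) = cfc (fun t : ℝ => max 0 (t - ε)) (a : A⁺¹) :=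
  Unitization.real_cfcₙ_eq_cfc_inr a _ (max_eq_left (by linarith))

variable [PartialOrder A] [StarOrderedRing A]

lemma cutdown_nonneg (a : A) (ε : ℝ) : 0 ≤ cutdown a ε :=
  cfcₙ_nonneg fun _ _ => le_max_left 0 _

lemma exists_norm_conj_sub_cutdown_le {a y : A} (ha : IsSelfAdjoint a) (hy : 0 ≤ y) {ε : ℝ}
    (hε : 0 ≤ ε) (hay : (a : A⁺¹) ≤ y + algebraMap ℝ A⁺¹ ε) {s : ℝ} (hs : 0 < s) :
    ∃ c : A, ‖c * y * star c - cutdown a ε‖ ≤ 2 * s := by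
  set r := CFC.sqrt (cutdown a ε)
  set F := cfc (cutdownFactor ε s) (a : A⁺¹)
  have hr : IsSelfAdjoint (r : A⁺¹) := (CFC.sqrt_nonneg _).isSelfAdjoint.inr ℂ
  have hrr : (r : A⁺¹) * r = cutdown a ε := by
    rw [← inr_mul, CFC.sqrt_mul_sqrt_self _ (cutdown_nonneg a ε)]
  have hF : IsSelfAdjoint F := cfc_predicate _ _
  have hle : (r : A⁺¹) * r ≤ F * y * F + algebraMap ℝ A⁺¹ s := by
    rw [hrr, inr_cutdown a hε]
    exact cfc_cutdown_le_conj_add (ha.inr ℂ) hs hay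
  obtain ⟨m, hm, hmy⟩ := exists_isSelfAdjoint_mul_mul_self_eq_one (z := F * y * F + _)
    (by positivity : 0 < 2 * s)
    (le_add_of_nonneg_left (hF.conjugate_nonneg (inr_nonneg_iff.mpr hy)))
  -- `m` and `F` need not lie in `A`, but `r` does, hence so does `r * (m * F)`.
  refine ⟨((r : A⁺¹) * (m * F)).snd, ?_⟩
  rw [norm_sub_rev, ← norm_inr (𝕜 := ℂ), inr_sub, inr_mul, inr_mul, inr_star,
    inr_snd_inr_mul, ← hrr]
  convert norm_mul_self_sub_conj_le hr hm hs.le hmy hle using 3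
  rw [star_mul, star_mul, star_mul, hr.star_eq, hm.star_eq, hF.star_eq]
  noncomm_ring

lemma cutdown_cuntzSub_of_le_add {a y : A} (ha : IsSelfAdjoint a) (hy : 0 ≤ y) {ε : ℝ}
    (hε : 0 ≤ ε) (hay : (a : A⁺¹) ≤ y + algebraMap ℝ A⁺¹ ε) : CuntzSub (cutdown a ε) y :=
  CuntzSub.of_forall_exists_norm_le fun δ hδ => by
    simpa [mul_div_cancel₀] using exists_norm_conj_sub_cutdown_le ha hy hε hay (half_pos hδ)

end NonUnital

theorem cutdown_cuntzSub_of_norm_lt_general {A : Type*} [NonUnitalCStarAlgebra A]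
    [PartialOrder A] [StarOrderedRing A]
    (a b : A) (ha : 0 ≤ a) (hb : 0 ≤ b) (η : ℝ)
    (hab : ‖a - b‖ < η) (lam : ℝ) (hlam : 0 < lam) :
    CuntzSub (cutdown a (lam + η)) (cutdown b lam) := by
  have hη : 0 < η := (norm_nonneg _).trans_lt hab
  have hab' : (a : A⁺¹) ≤ b + algebraMap ℝ A⁺¹ η :=
    le_add_algebraMap_of_norm_sub_le
      (by rw [← inr_sub]; exact (ha.isSelfAdjoint.sub hb.isSelfAdjoint).inr ℂ)
      (by rw [← inr_sub, norm_inr]; exact hab.le)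
  have hb' : (b : A⁺¹) ≤ cutdown b lam + algebraMap ℝ A⁺¹ lam := by
    rw [inr_cutdown b hlam.le]
    exact le_cfc_cutdown_add_algebraMap (hb.isSelfAdjoint.inr ℂ) lam
  refine cutdown_cuntzSub_of_le_add ha.isSelfAdjoint (cutdown_nonneg b lam) (by positivity) ?_
  calc (a : A⁺¹) ≤ b + algebraMap ℝ A⁺¹ η := hab'
    _ ≤ cutdown b lam + algebraMap ℝ A⁺¹ lam + algebraMap ℝ A⁺¹ η := by gcongr
    _ = cutdown b lam + algebraMap ℝ A⁺¹ (lam + η) := by rw [map_add, add_assoc]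

/-- Let `A` be a C*-algebra, `a b ∈ A₊` with `‖a - b‖ < η` and `λ > 0`.
Then `(a - λ - η)₊ ≾_A (b - λ)₊`. -/
theorem cutdown_cuntzSub_of_norm_lt {A : Type*} [NonUnitalCStarAlgebra A]
    [PartialOrder A] [StarOrderedRing A]
    (a b : A) (ha : 0 ≤ a) (hb : 0 ≤ b) (η : ℝ) (hη : 0 < η)
    (hab : ‖a - b‖ < η) (lam : ℝ) (hlam : 0 < lam) :
    CuntzSub (cutdown a (lam + η)) (cutdown b lam) :=
  cutdown_cuntzSub_of_norm_lt_general a b ha hb η hab lam hlam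
end

section
/- Let $A$ be a C*-algebra, let $G$ be a finite group, and suppose $\alpha: G \to \mathrm{Aut}(A)$ arises as a direct limit of a direct system of $G$-C*-algebras $(A_j, \alpha^{(j)})$ in which each action $\alpha^{(j)}$ is inner (i.e., for every finite subset of $A_j$ there is a group homomorphism $g \mapsto z_g$ into the unitary group of $A_j$ implementing $\alpha^{(j)}$ exactly by conjugation). Then $\alpha$ is strictly approximately inner: for every finite set $F \subset A$ and every $\varepsilon > 0$, there is a group homomorphism $g \mapsto w_g$ from $G$ to the unitary group of $A$ such that $\|\alpha_g(a) - w_g a w_g^*\| < \varepsilon$ for all $g \in G$ and $a \in F$. -/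
/-!
Approximate each element of `F` within `ε / 2` by the image of an element of a single stage
`A_j`; the inner action on `A_j` is implemented on these finitely many approximants by a
homomorphism `z : G →* unitary A_j`, and `ψ_j ∘ z` implements `α` on `F` up to `ε`, because
two isometric automorphisms agreeing at `x` differ at `a` by at most `2 ‖a - x‖`.
-/

/-- Strict approximate innerness of an action of a finite group on a unital C*-algebra:
for every finite set and tolerance there is a group homomorphism into the unitary group
approximately implementing the action. -/
def StrictlyApproxInner {G : Type*} [Group G] {A : Type*} [CStarAlgebra A]
    (α : G → A → A) : Prop :=
  ∀ (F : Finset A) (ε : ℝ), 0 < ε → ∃ z : G →* unitary A,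
    ∀ g : G, ∀ a ∈ F, ‖α g a - (z g : A) * a * star ((z g : A))‖ < ε

open Set

theorem exists_finset_forall_exists_dist_lt_of_dense_iUnion_range
    {J : Type*} [Preorder J] [IsDirected J (· ≤ ·)] [Nonempty J]
    {X : J → Type*} {A : Type*} [PseudoMetricSpace A] (f : ∀ j, X j → A)
    (hf : Monotone fun j => range (f j)) (hdense : Dense (⋃ j, range (f j)))
    (F : Finset A) {ε : ℝ} (hε : 0 < ε) :
    ∃ j, ∃ F' : Finset (X j), ∀ a ∈ F, ∃ b ∈ F', dist (f j b) a < ε := by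
  classical
  have hclose : ∀ a : A, ∃ i, ∃ x : X i, dist (f i x) a < ε := by
    intro a
    obtain ⟨_, hy, hya⟩ := hdense.exists_dist_lt a hε
    obtain ⟨i, x, rfl⟩ := mem_iUnion.mp hy
    exact ⟨i, x, by rwa [dist_comm]⟩
  choose i x hx using hclose
  obtain ⟨j, hj⟩ := (F.image i).exists_le
  choose y hy using fun a : F => hf (hj _ (Finset.mem_image_of_mem i a.2)) ⟨x a, rfl⟩
  refine ⟨j, Finset.univ.image y, fun a ha =>
    ⟨y ⟨a, ha⟩, Finset.mem_image_of_mem _ (Finset.mem_univ _), ?_⟩⟩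
  rw [hy]
  exact hx a

theorem StarAlgEquiv.norm_apply_sub_apply_le_of_apply_eq
    {A B : Type*} [NonUnitalCStarAlgebra A] [NonUnitalCStarAlgebra B]
    (σ τ : A ≃⋆ₐ[ℂ] B) {a x : A} (hx : σ x = τ x) :
    ‖σ a - τ a‖ ≤ 2 * ‖a - x‖ :=
  calc ‖σ a - τ a‖ = ‖σ (a - x) - τ (a - x)‖ := by
        rw [map_sub, map_sub, hx, sub_sub_sub_cancel_right]
    _ ≤ ‖σ (a - x)‖ + ‖τ (a - x)‖ := norm_sub_le _ _
    _ = 2 * ‖a - x‖ := by rw [norm_map, norm_map, two_mul]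

theorem strictlyApproxInner_of_directLimit_inner_general
    {G : Type*} [Group G]
    {J : Type*} [Preorder J] [IsDirected J (· ≤ ·)] [Nonempty J]
    (Afam : J → Type*) [∀ j, CStarAlgebra (Afam j)]
    {A : Type*} [CStarAlgebra A]
    (αfam : ∀ j, G → (Afam j ≃⋆ₐ[ℂ] Afam j))
    (α : G → (A ≃⋆ₐ[ℂ] A))
    (φ : ∀ i j : J, i ≤ j → (Afam i →⋆ₐ[ℂ] Afam j))
    (ψ : ∀ j : J, Afam j →⋆ₐ[ℂ] A)
    (hψcomp : ∀ (i j : J) (hij : i ≤ j) (a : Afam i), ψ j (φ i j hij a) = ψ i a)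
    (hψequiv : ∀ (j : J) (g : G) (a : Afam j), ψ j (αfam j g a) = α g (ψ j a))
    (hdense : Dense (⋃ j : J, Set.range (ψ j)))
    (hinner : ∀ (j : J) (F : Finset (Afam j)), ∃ z : G →* unitary (Afam j),
      ∀ g : G, ∀ a ∈ F, αfam j g a = (z g : Afam j) * a * star ((z g : Afam j))) :
    StrictlyApproxInner (fun g a => α g a) := by
  intro F ε hε
  have hmono : Monotone fun j => range (ψ j) := by
    rintro i j hij _ ⟨a, rfl⟩
    exact ⟨φ i j hij a, hψcomp i j hij a⟩
  obtain ⟨j, F', hF'⟩ := exists_finset_forall_exists_dist_lt_of_dense_iUnion_range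
    (fun j => ψ j) hmono hdense F (half_pos hε)
  obtain ⟨z, hz⟩ := hinner j F'
  let w : G →* unitary A := (Unitary.map (StarMonoidHom.ofClass (ψ j))).toMonoidHom.comp z
  refine ⟨w, fun g a ha => ?_⟩
  obtain ⟨b, hb, hba⟩ := hF' a ha
  have hagree : α g (ψ j b) = Unitary.conjStarAlgAut ℂ A (w g) (ψ j b) := by
    rw [← hψequiv, hz g b hb, map_mul, map_mul, map_star]
    rfl
  calc ‖α g a - (w g : A) * a * star (w g : A)‖
      = ‖α g a - Unitary.conjStarAlgAut ℂ A (w g) a‖ := rfl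
    _ ≤ 2 * ‖a - ψ j b‖ := (α g).norm_apply_sub_apply_le_of_apply_eq _ hagree
    _ < ε := by
      rw [← dist_eq_norm, dist_comm]
      linarith

/-- Let `A` be a C*-algebra carrying an action `α` of a finite group `G`
which arises as the direct limit of a directed system of `G`-C*-algebras `(A_j, α_j)` (with
equivariant connecting maps `φ` and equivariant limit maps `ψ_j` whose ranges have dense
union), in which each `α_j` is inner: for every finite subset of `A_j` there is a group
homomorphism into the unitary group implementing `α_j` exactly by conjugation.
Then `α` is strictly approximately inner. -/
theorem strictlyApproxInner_of_directLimit_inner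
    {G : Type*} [Group G] [Fintype G]
    {J : Type*} [Preorder J] [IsDirected J (· ≤ ·)] [Nonempty J]
    (Afam : J → Type*) [∀ j, CStarAlgebra (Afam j)]
    {A : Type*} [CStarAlgebra A]
    (αfam : ∀ j, G → (Afam j ≃⋆ₐ[ℂ] Afam j))
    (hαfam : ∀ (j : J) (g h : G) (a : Afam j), αfam j (g * h) a = αfam j g (αfam j h a))
    (α : G → (A ≃⋆ₐ[ℂ] A))
    (hα : ∀ (g h : G) (a : A), α (g * h) a = α g (α h a))
    (φ : ∀ i j : J, i ≤ j → (Afam i →⋆ₐ[ℂ] Afam j))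
    (hφcomp : ∀ (i j k : J) (hij : i ≤ j) (hjk : j ≤ k) (a : Afam i),
      φ j k hjk (φ i j hij a) = φ i k (hij.trans hjk) a)
    (hφequiv : ∀ (i j : J) (hij : i ≤ j) (g : G) (a : Afam i),
      φ i j hij (αfam i g a) = αfam j g (φ i j hij a))
    (ψ : ∀ j : J, Afam j →⋆ₐ[ℂ] A)
    (hψcomp : ∀ (i j : J) (hij : i ≤ j) (a : Afam i), ψ j (φ i j hij a) = ψ i a)
    (hψequiv : ∀ (j : J) (g : G) (a : Afam j), ψ j (αfam j g a) = α g (ψ j a))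
    (hdense : Dense (⋃ j : J, Set.range (ψ j)))
    (hinner : ∀ (j : J) (F : Finset (Afam j)), ∃ z : G →* unitary (Afam j),
      ∀ g : G, ∀ a ∈ F, αfam j g a = (z g : Afam j) * a * star ((z g : Afam j))) :
    StrictlyApproxInner (fun g a => α g a) :=
  strictlyApproxInner_of_directLimit_inner_general Afam αfam α φ ψ hψcomp hψequiv hdense hinner
end

section
/- Let $A$ be a unital C*-algebra, let $G$ be a finite group, and let $\alpha: G \to \mathrm{Aut}(A)$ be a strictly approximately inner action. Then for every finite set $F \subset C^*(G, A, \alpha)$ and every $\varepsilon > 0$, there exists a unital surjective linear map $\psi: C^*(G, A, \alpha) \to A$ such that: (1) $\|\psi\| \leq \mathrm{card}(G)$; (2) $\psi(a) = a$ for all $a \in A$; (3) $\|\psi(xyz^*) - \psi(x)\psi(y)\psi(z)^*\| < \varepsilon$ for all $x, y, z \in F$. -/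
open scoped BigOperators

/-- A realization of the crossed product `C*(G, A, α)` of a finite group action:
a C*-algebra `B` together with an isometric unital *-homomorphism `ι : A → B` and
implementing unitaries `u g` such that every element of `B` is a sum `∑ g, ι(a_g) u_g`
and the coefficients are norm-controlled by the whole sum. -/
structure CrossedProduct (G : Type*) [Group G] [Fintype G]
    (A B : Type*) [CStarAlgebra A] [CStarAlgebra B] (α : G → A → A) where
  ι : A →⋆ₐ[ℂ] B
  u : G → B
  u_mul : ∀ g h : G, u g * u h = u (g * h)
  u_star : ∀ g : G, star (u g) = u g⁻¹
  u_one : u 1 = 1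
  ι_isometry : ∀ a : A, ‖ι a‖ = ‖a‖
  covariant : ∀ (g : G) (a : A), u g * ι a * star (u g) = ι (α g a)
  spans : ∀ b : B, ∃ f : G → A, b = ∑ g : G, ι (f g) * u g
  coeff_norm_le : ∀ (f : G → A) (g : G), ‖f g‖ ≤ ‖∑ h : G, ι (f h) * u h‖

/-! If `v : G →* unitary A` implemented `α` exactly, the integrated form `ι a * u g ↦ a * v g`
of the covariant pair `(id, v)` would be a unital *-homomorphism `B → A` restricting to the
identity on `A`. When `v` implements `α` only up to `δ` on the finitely many coefficients
involved, the defects `ψ (b * c) - ψ b * ψ c` and `ψ (star b) - star (ψ b)` are explicit sums of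
`card G ^ 2`, resp. `card G`, terms of size `O(δ)`, and
`ψ (x * y * star z) - ψ x * ψ y * star (ψ z)` splits into three such defects.
The bound `‖ψ‖ ≤ card G` comes from `‖a_g‖ ≤ ‖∑ ι a_h u_h‖`. -/

def ApproxImplementsOn {G : Type*} [Group G] {A : Type*} [CStarAlgebra A] (α : G → A → A)
    (v : G →* unitary A) (S : Set A) (δ : ℝ) : Prop :=
  ∀ g, ∀ a ∈ S, ‖α g a - v g * a * star (v g : A)‖ ≤ δ

lemma ApproxImplementsOn.mono {G : Type*} [Group G] {A : Type*} [CStarAlgebra A]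
    {α : G → A → A} {v : G →* unitary A} {S T : Set A} {δ : ℝ}
    (h : ApproxImplementsOn α v S δ) (hTS : T ⊆ S) : ApproxImplementsOn α v T δ :=
  fun g a ha => h g a (hTS ha)

lemma StrictlyApproxInner.exists_approxImplementsOn {G : Type*} [Group G] {A : Type*}
    [CStarAlgebra A] {α : G → A → A} (h : StrictlyApproxInner α) {S : Set A} (hS : S.Finite)
    {δ : ℝ} (hδ : 0 < δ) : ∃ v : G →* unitary A, ApproxImplementsOn α v S δ :=
  (h hS.toFinset δ hδ).imp fun _ hv g a ha => (hv g a (hS.mem_toFinset.2 ha)).le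

namespace CrossedProduct

variable {G : Type*} [Group G] [Fintype G] {A B : Type*} [CStarAlgebra A] [CStarAlgebra B]
  {α : G → A → A} (cp : CrossedProduct G A B α)

lemma u_mul_ι (g : G) (a : A) : cp.u g * cp.ι a = cp.ι (α g a) * cp.u g := by
  rw [← cp.covariant, mul_assoc _ (star _), cp.u_star, cp.u_mul, inv_mul_cancel, cp.u_one, mul_one]

lemma ι_mul_u_mul_ι_mul_u (a b : A) (g h : G) :
    cp.ι a * cp.u g * (cp.ι b * cp.u h) = cp.ι (a * α g b) * cp.u (g * h) := by
  rw [map_mul, ← cp.u_mul, mul_assoc (cp.ι a), ← mul_assoc (cp.u g), cp.u_mul_ι]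
  simp only [mul_assoc]

lemma star_ι_mul_u (a : A) (g : G) :
    star (cp.ι a * cp.u g) = cp.ι (α g⁻¹ (star a)) * cp.u g⁻¹ := by
  rw [star_mul, cp.u_star, ← map_star, cp.u_mul_ι]

noncomputable def sumMap : (G → A) →ₗ[ℂ] B :=
  ∑ g, LinearMap.mulRight ℂ (cp.u g) ∘ₗ cp.ι.toAlgHom.toLinearMap ∘ₗ LinearMap.proj g

@[simp] lemma sumMap_apply (f : G → A) : cp.sumMap f = ∑ g, cp.ι (f g) * cp.u g := by
  simp [sumMap]

lemma sumMap_injective : Function.Injective cp.sumMap := by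
  refine (injective_iff_map_eq_zero _).2 fun f hf => funext fun g => ?_
  simpa [← sumMap_apply, hf] using cp.coeff_norm_le f g

noncomputable def coeff : B ≃ₗ[ℂ] (G → A) :=
  (LinearEquiv.ofBijective cp.sumMap
    ⟨cp.sumMap_injective, fun b => (cp.spans b).imp fun f hf => by rw [sumMap_apply, hf]⟩).symm

lemma sum_coeff (b : B) : ∑ g, cp.ι (cp.coeff b g) * cp.u g = b := by
  rw [← sumMap_apply]
  exact (LinearEquiv.ofBijective _ _).apply_symm_apply b

lemma coeff_sum (f : G → A) : cp.coeff (∑ g, cp.ι (f g) * cp.u g) = f := by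
  rw [← sumMap_apply]
  exact (LinearEquiv.ofBijective _ _).symm_apply_apply f

lemma norm_coeff_le (b : B) (g : G) : ‖cp.coeff b g‖ ≤ ‖b‖ := by
  simpa only [sum_coeff] using cp.coeff_norm_le (cp.coeff b) g

variable (v : G →* unitary A)

noncomputable def integratedForm : B →ₗ[ℂ] A :=
  (∑ g, LinearMap.mulRight ℂ (v g : A) ∘ₗ LinearMap.proj g) ∘ₗ cp.coeff.toLinearMap

lemma integratedForm_apply (b : B) : cp.integratedForm v b = ∑ g, cp.coeff b g * v g := by
  simp [integratedForm]

lemma integratedForm_sum (f : G → A) :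
    cp.integratedForm v (∑ g, cp.ι (f g) * cp.u g) = ∑ g, f g * v g := by
  rw [integratedForm_apply, coeff_sum]

lemma integratedForm_ι_mul_u (a : A) (g : G) :
    cp.integratedForm v (cp.ι a * cp.u g) = a * v g := by
  classical
  have hsingle : cp.ι a * cp.u g = ∑ h, cp.ι ((Pi.single g a : G → A) h) * cp.u h := by
    simp [Pi.single_apply, apply_ite cp.ι, ite_mul]
  rw [hsingle, integratedForm_sum]
  simp [Pi.single_apply]

lemma integratedForm_ι (a : A) : cp.integratedForm v (cp.ι a) = a := by
  simpa [cp.u_one] using cp.integratedForm_ι_mul_u v a 1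

lemma norm_integratedForm_le (b : B) : ‖cp.integratedForm v b‖ ≤ Fintype.card G * ‖b‖ := by
  rw [integratedForm_apply, ← nsmul_eq_mul, ← Finset.card_univ, ← Finset.sum_const]
  refine norm_sum_le_of_le _ fun g _ => ?_
  rw [CStarRing.norm_mul_coe_unitary]
  exact cp.norm_coeff_le b g

lemma integratedForm_mul_sub (b c : B) :
    cp.integratedForm v (b * c) - cp.integratedForm v b * cp.integratedForm v c =
      ∑ p : G × G, cp.coeff b p.1 *
        (α p.1 (cp.coeff c p.2) - v p.1 * cp.coeff c p.2 * star (v p.1 : A)) * v (p.1 * p.2) := by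
  have hprod : b * c = ∑ p : G × G,
      cp.ι (cp.coeff b p.1 * α p.1 (cp.coeff c p.2)) * cp.u (p.1 * p.2) := by
    conv_lhs => rw [← cp.sum_coeff b, ← cp.sum_coeff c]
    simp only [Finset.sum_mul_sum, ι_mul_u_mul_ι_mul_u, Fintype.sum_prod_type]
  have hψ : cp.integratedForm v b * cp.integratedForm v c = ∑ p : G × G,
      cp.coeff b p.1 * (v p.1 * cp.coeff c p.2 * star (v p.1 : A)) * v (p.1 * p.2) := by
    have hcancel (g : G) (a : A) : star (v g : A) * (v g * a) = a := by
      rw [← mul_assoc, Unitary.coe_star_mul_self, one_mul]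
    simp only [integratedForm_apply, Finset.sum_mul_sum, Fintype.sum_prod_type, map_mul,
      Submonoid.coe_mul, mul_assoc, hcancel]
  rw [hprod, map_sum, hψ, ← Finset.sum_sub_distrib]
  simp only [integratedForm_ι_mul_u, mul_sub, sub_mul]

lemma integratedForm_star_sub (b : B) :
    cp.integratedForm v (star b) - star (cp.integratedForm v b) =
      ∑ g, (α g⁻¹ (star (cp.coeff b g)) - v g⁻¹ * star (cp.coeff b g) * star (v g⁻¹ : A)) *
        v g⁻¹ := by
  have hstar : star b = ∑ g, cp.ι (α g⁻¹ (star (cp.coeff b g))) * cp.u g⁻¹ := by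
    conv_lhs => rw [← cp.sum_coeff b]
    simp only [star_sum, star_ι_mul_u]
  have hcoe (g : G) : star (v g : A) = v g⁻¹ := by
    rw [← Unitary.coe_star, Unitary.star_eq_inv, map_inv]
  have hcancel (g : G) (a : A) : a * ((v g : A) * v g⁻¹) = a := by
    rw [← hcoe, Unitary.mul_star_self_of_mem (v g).2, mul_one]
  rw [hstar, map_sum, integratedForm_apply, star_sum, ← Finset.sum_sub_distrib]
  simp only [integratedForm_ι_mul_u, star_mul, hcoe, inv_inv, sub_mul, mul_assoc, hcancel]

variable {cp v}

lemma norm_integratedForm_mul_sub_le {b c : B} {δ : ℝ}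
    (hc : ApproxImplementsOn α v (Set.range (cp.coeff c)) δ) :
    ‖cp.integratedForm v (b * c) - cp.integratedForm v b * cp.integratedForm v c‖ ≤
      Fintype.card G ^ 2 * (‖b‖ * δ) := by
  rw [integratedForm_mul_sub, sq, ← Nat.cast_mul, ← Fintype.card_prod, ← nsmul_eq_mul,
    ← Finset.card_univ, ← Finset.sum_const]
  refine norm_sum_le_of_le _ fun p _ => ?_
  rw [CStarRing.norm_mul_coe_unitary]
  exact (norm_mul_le _ _).trans <|
    mul_le_mul (cp.norm_coeff_le b p.1) (hc p.1 _ ⟨p.2, rfl⟩) (norm_nonneg _) (norm_nonneg _)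

lemma norm_integratedForm_star_sub_le {b : B} {δ : ℝ}
    (hb : ApproxImplementsOn α v (Set.range fun g => star (cp.coeff b g)) δ) :
    ‖cp.integratedForm v (star b) - star (cp.integratedForm v b)‖ ≤ Fintype.card G * δ := by
  rw [integratedForm_star_sub, ← nsmul_eq_mul, ← Finset.card_univ, ← Finset.sum_const]
  refine norm_sum_le_of_le _ fun g _ => ?_
  rw [CStarRing.norm_mul_coe_unitary]
  exact hb g⁻¹ _ ⟨g, rfl⟩

lemma norm_integratedForm_mul_mul_star_sub_le {x y z : B} {M δ : ℝ}
    (hx : ‖x‖ ≤ M) (hy : ‖y‖ ≤ M) (hz : ‖z‖ ≤ M)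
    (hvy : ApproxImplementsOn α v (Set.range (cp.coeff y)) δ)
    (hvz : ApproxImplementsOn α v (Set.range (cp.coeff (star z))) δ)
    (hvz' : ApproxImplementsOn α v (Set.range fun g => star (cp.coeff z g)) δ) :
    ‖cp.integratedForm v (x * y * star z) -
        cp.integratedForm v x * cp.integratedForm v y * star (cp.integratedForm v z)‖ ≤
      3 * Fintype.card G ^ 3 * M ^ 2 * δ := by
  set ψ := cp.integratedForm v
  set n : ℝ := (Fintype.card G : ℝ)
  have hn : 1 ≤ n := Nat.one_le_cast.2 Fintype.card_pos
  have hM : 0 ≤ M := (norm_nonneg _).trans hx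
  have hδ : 0 ≤ δ := (norm_nonneg _).trans (hvy 1 _ ⟨1, rfl⟩)
  have hψ {b : B} (hb : ‖b‖ ≤ M) : ‖ψ b‖ ≤ n * M :=
    (norm_integratedForm_le cp v b).trans (by gcongr)
  have h₁ : ‖ψ (x * y * star z) - ψ (x * y) * ψ (star z)‖ ≤ n ^ 2 * (M ^ 2 * δ) :=
    (norm_integratedForm_mul_sub_le hvz).trans <| by
      gcongr
      exact (norm_mul_le x y).trans (by nlinarith [norm_nonneg x, norm_nonneg y])
  have h₂ : ‖ψ (x * y) - ψ x * ψ y‖ ≤ n ^ 2 * (M * δ) :=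
    (norm_integratedForm_mul_sub_le hvy).trans (by gcongr)
  have h₃ : ‖ψ (star z) - star (ψ z)‖ ≤ n * δ := norm_integratedForm_star_sub_le hvz'
  have hn₂ : n ^ 2 * (M ^ 2 * δ) ≤ n ^ 3 * (M ^ 2 * δ) := by gcongr; norm_num
  calc _ = ‖(ψ (x * y * star z) - ψ (x * y) * ψ (star z)) + (ψ (x * y) - ψ x * ψ y) * ψ (star z)
          + ψ x * ψ y * (ψ (star z) - star (ψ z))‖ := by congr 1; noncomm_ring
    _ ≤ ‖ψ (x * y * star z) - ψ (x * y) * ψ (star z)‖ + ‖ψ (x * y) - ψ x * ψ y‖ * ‖ψ (star z)‖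
          + ‖ψ x‖ * ‖ψ y‖ * ‖ψ (star z) - star (ψ z)‖ := by
        refine (norm_add₃_le ..).trans ?_
        gcongr
        · exact norm_mul_le _ _
        · exact (norm_mul_le _ _).trans (by gcongr; exact norm_mul_le _ _)
    _ ≤ n ^ 2 * (M ^ 2 * δ) + n ^ 2 * (M * δ) * (n * M) + n * M * (n * M) * (n * δ) := by
        gcongr
        exacts [hψ (by rwa [norm_star]), hψ hx, hψ hy]
    _ ≤ 3 * n ^ 3 * M ^ 2 * δ := by linarith

end CrossedProduct

theorem exists_approx_multiplicative_expectation_general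
    {G : Type*} [Group G] [Fintype G] {A B : Type*} [CStarAlgebra A] [CStarAlgebra B]
    (α : G → (A ≃⋆ₐ[ℂ] A))
    (cp : CrossedProduct G A B (fun g a => α g a))
    (hsai : StrictlyApproxInner (fun g a => α g a))
    (F : Finset B) (ε : ℝ) (hε : 0 < ε) :
    ∃ ψ : B →ₗ[ℂ] A,
      ψ 1 = 1 ∧
      Function.Surjective ψ ∧
      (∀ x : B, ‖ψ x‖ ≤ (Fintype.card G : ℝ) * ‖x‖) ∧
      (∀ a : A, ψ (cp.ι a) = a) ∧
      (∀ x ∈ F, ∀ y ∈ F, ∀ z ∈ F,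
        ‖ψ (x * y * star z) - ψ x * ψ y * star (ψ z)‖ < ε) := by
  classical
  obtain ⟨M, hM, hFM⟩ : ∃ M : ℝ, 0 < M ∧ ∀ x ∈ F, ‖x‖ ≤ M :=
    ⟨1 + ∑ x ∈ F, ‖x‖, by positivity, fun x hx =>
      (F.single_le_sum (fun x _ => norm_nonneg x) hx).trans (le_add_of_nonneg_left zero_le_one)⟩
  set δ := ε / (4 * Fintype.card G ^ 3 * M ^ 2)
  have hδ : 0 < δ := by positivity
  let S : Set A := ⋃ x ∈ F,
    Set.range (cp.coeff x) ∪ Set.range (cp.coeff (star x)) ∪ Set.range fun g => star (cp.coeff x g)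
  have hS : S.Finite := F.finite_toSet.biUnion fun x _ =>
    ((Set.finite_range _).union (Set.finite_range _)).union (Set.finite_range _)
  obtain ⟨v, hv⟩ := hsai.exists_approxImplementsOn hS hδ
  refine ⟨cp.integratedForm v, by simpa using cp.integratedForm_ι v 1,
    fun a => ⟨cp.ι a, cp.integratedForm_ι v a⟩, cp.norm_integratedForm_le v,
    cp.integratedForm_ι v, fun x hx y hy z hz => ?_⟩
  have hε' : 3 * Fintype.card G ^ 3 * M ^ 2 * δ = 3 / 4 * ε := by
    simp only [δ]
    field_simp
  calc _ ≤ 3 * Fintype.card G ^ 3 * M ^ 2 * δ :=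
        CrossedProduct.norm_integratedForm_mul_mul_star_sub_le (hFM x hx) (hFM y hy) (hFM z hz)
          (hv.mono fun a ha => Set.mem_biUnion hy (.inl (.inl ha)))
          (hv.mono fun a ha => Set.mem_biUnion hz (.inl (.inr ha)))
          (hv.mono fun a ha => Set.mem_biUnion hz (.inr ha))
    _ < ε := by linarith

/-- Let `α : G → Aut(A)` be a strictly approximately inner action of a finite
group on a unital C*-algebra.  Then for every finite `F ⊆ C*(G,A,α)` and `ε > 0` there is a
unital surjective linear map `ψ : C*(G,A,α) → A` with `‖ψ‖ ≤ card G`, `ψ(a) = a` for `a ∈ A`,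
and `‖ψ(xyz*) - ψ(x)ψ(y)ψ(z)*‖ < ε` for `x, y, z ∈ F`. -/
theorem exists_approx_multiplicative_expectation
    {G : Type*} [Group G] [Fintype G] {A B : Type*} [CStarAlgebra A] [CStarAlgebra B]
    (α : G → (A ≃⋆ₐ[ℂ] A))
    (hα : ∀ (g h : G) (a : A), α (g * h) a = α g (α h a))
    (cp : CrossedProduct G A B (fun g a => α g a))
    (hsai : StrictlyApproxInner (fun g a => α g a))
    (F : Finset B) (ε : ℝ) (hε : 0 < ε) :
    ∃ ψ : B →ₗ[ℂ] A,
      ψ 1 = 1 ∧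
      Function.Surjective ψ ∧
      (∀ x : B, ‖ψ x‖ ≤ (Fintype.card G : ℝ) * ‖x‖) ∧
      (∀ a : A, ψ (cp.ι a) = a) ∧
      (∀ x ∈ F, ∀ y ∈ F, ∀ z ∈ F,
        ‖ψ (x * y * star z) - ψ x * ψ y * star (ψ z)‖ < ε) :=
  exists_approx_multiplicative_expectation_general α cp hsai F ε hε
end
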